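/- arXiv:2210.05761 — 2 statements merged into one kernel-verified Lean document; each statement's English description precedes it below -/
import Mathlib

section
/- Let (H, 𝒰, ℰ, 𝒥, σ) be a Z-problem with dim H < ∞ such that the compression of σ to 𝒰 ⊕ ℰ is self-adjoint (σ₀₀* = σ₀₀, σ₁₁* = σ₁₁, σ₀₁* = σ₁₀), ker σ₁₁ ⊆ ker σ₀₁, and σ₁₁ ≥ 0. Set σ⁎ = σ₀₀ − σ₀₁σ₁₁⁺σ₁₀. Then σ⁎ is self-adjoint, for every E₀ ∈ 𝒰 the quantity ⟨E₀, σ⁎E₀⟩ equals the minimum over E ∈ ℰ of ⟨E₀ + E, σ(E₀ + E)⟩ (these inner products are real), the set of minimizers is exactly { −σ₁₁⁺σ₁₀E₀ + K : K ∈ ker σ₁₁ }, and σ⁎ ≤ σ₀₀. -/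
/-!
Write `A = σ₁₁` and `C = σ₀₁`, so that `σ₁₀ = C*` and `σ⁎ = σ₀₀ - C A⁺ C*`. From `A A⁺ A = A` and
the self-adjointness of `A` and `A A⁺` one gets `A A A⁺ = A`, so `1 - A A⁺` maps into
`ker A ⊆ ker C`, i.e. `C A A⁺ = C`. Hence `C A⁺ C* = (A⁺ C*)* A (A⁺ C*)` is a congruence of the
positive operator `A`: it is self-adjoint and positive, which gives `σ⁎* = σ⁎` and `σ⁎ ≤ σ₀₀`.
For the minimum, complete the square: with `b = C* E₀` (which satisfies `A A⁺ b = b`),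
`⟨E₀ + E, σ (E₀ + E)⟩ = ⟨E₀, σ⁎ E₀⟩ + ⟨E + A⁺ b, A (E + A⁺ b)⟩`, and for positive `A` the last
term vanishes exactly when `A (E + A⁺ b) = 0`.
-/

/-- The generalized Schur complement `σ₀₀ - σ₀₁ σ₁₁⁺ σ₁₀` of an operator `σ` with respect
to orthogonal projections `P0, P1`, where `B` is the Moore–Penrose pseudoinverse of the
block `σ₁₁ = P1 σ P1`. -/
noncomputable def gschurLM {𝕂 : Type*} [RCLike 𝕂] {H : Type*} [NormedAddCommGroup H]
    [InnerProductSpace 𝕂 H] (P0 P1 σ B : H →ₗ[𝕂] H) : H →ₗ[𝕂] H :=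
  (P0 ∘ₗ (σ ∘ₗ P0)) - (P0 ∘ₗ (σ ∘ₗ P1)) ∘ₗ (B ∘ₗ (P1 ∘ₗ (σ ∘ₗ P0)))

open LinearMap RCLike

theorem LinearMap.comp_eq_of_ker_le_ker {R M N : Type*} [Ring R] [AddCommGroup M]
    [AddCommGroup N] [Module R M] [Module R N] {A T : M →ₗ[R] M} {C : M →ₗ[R] N}
    (hker : ker A ≤ ker C) (hAT : A ∘ₗ T = A) : C ∘ₗ T = C := by
  ext x
  have hx : x - T x ∈ ker A := by
    rw [mem_ker, map_sub, ← comp_apply, hAT, sub_self]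
  have hCx := hker hx
  rw [mem_ker, map_sub, sub_eq_zero] at hCx
  exact hCx.symm

section InnerProduct

variable {𝕂 : Type*} [RCLike 𝕂] {E F : Type*} [NormedAddCommGroup E] [InnerProductSpace 𝕂 E]
  [NormedAddCommGroup F] [InnerProductSpace 𝕂 F]

local notation "⟪" x ", " y "⟫" => inner 𝕂 x y

theorem LinearMap.IsPositive.apply_eq_zero_of_re_inner_eq_zero {T : E →ₗ[𝕂] E}
    (hT : T.IsPositive) {x : E} (hx : re ⟪x, T x⟫ = 0) : T x = 0 := by
  have hquad : ∀ t : ℝ, 0 ≤ re ⟪T x, T (T x)⟫ * (t * t) + 2 * ‖T x‖ ^ 2 * t + 0 := by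
    intro t
    have h := hT.re_inner_nonneg_right (x + (t : 𝕂) • T x)
    simp only [map_add, map_smul, inner_add_left, inner_add_right, inner_smul_left,
      inner_smul_right, conj_ofReal, re_ofReal_mul, hx, ← hT.isSymmetric x (T x),
      inner_self_eq_norm_sq] at h
    linarith
  have hdisc := discrim_le_zero hquad
  rw [discrim] at hdisc
  have hnorm : ‖T x‖ ^ 2 = 0 := by nlinarith [sq_nonneg (‖T x‖ ^ 2)]
  simpa using hnorm

theorem LinearMap.IsSymmetric.re_inner_add_apply_add {A : E →ₗ[𝕂] E} (hA : A.IsSymmetric)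
    {b c : E} (hc : A c = b) (y : E) :
    re ⟪y + c, A (y + c)⟫ = re ⟪y, A y⟫ + 2 * re ⟪y, b⟫ + re ⟪b, c⟫ := by
  simp only [map_add, inner_add_left, inner_add_right, hc, ← hA c y]
  rw [inner_re_symm b y, inner_re_symm c b]
  ring

theorem LinearMap.IsPositive.isLeast_and_eq_iff {A : E →ₗ[𝕂] E} (hA : A.IsPositive)
    {P : E →ₗ[𝕂] E} {c : E} (hc : P c = c) {f : E → ℝ} {s : ℝ}
    (hf : ∀ y, P y = y → f y = s + re ⟪y + c, A (y + c)⟫) :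
    IsLeast {r | ∃ y, P y = y ∧ r = f y} s ∧
      ∀ y, P y = y → (f y = s ↔ ∃ K, P K = K ∧ A K = 0 ∧ y = -c + K) := by
  have hPneg : P (-c) = -c := by rw [map_neg, hc]
  refine ⟨⟨⟨-c, hPneg, by simp [hf _ hPneg]⟩, ?_⟩, fun y hy => ?_⟩
  · rintro r ⟨y, hy, rfl⟩
    rw [hf y hy]
    linarith [hA.re_inner_nonneg_right (y + c)]
  · rw [hf y hy, add_eq_left]
    constructor
    · intro h
      refine ⟨y + c, by rw [map_add, hy, hc], hA.apply_eq_zero_of_re_inner_eq_zero h, by abel⟩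
    · rintro ⟨K, -, hK, rfl⟩
      simp [hK]

section Pseudoinverse

variable [FiniteDimensional 𝕂 E] {A B : E →ₗ[𝕂] E}

theorem LinearMap.comp_comp_pinv_eq_of_ker_le [FiniteDimensional 𝕂 F]
    (hA : A.adjoint = A) (hABA : A ∘ₗ B ∘ₗ A = A)
    (hAB : (A ∘ₗ B).adjoint = A ∘ₗ B) {C : E →ₗ[𝕂] F} (hker : ker A ≤ ker C) :
    C ∘ₗ A ∘ₗ B = C := by
  refine comp_eq_of_ker_le_ker hker ?_
  have h := congrArg adjoint hABA
  rwa [← comp_assoc, adjoint_comp, hAB, hA] at h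

theorem LinearMap.comp_pinv_comp_adjoint_eq_adjoint [FiniteDimensional 𝕂 F]
    (hA : A.adjoint = A)
    (hABA : A ∘ₗ B ∘ₗ A = A) (hAB : (A ∘ₗ B).adjoint = A ∘ₗ B) {C : E →ₗ[𝕂] F}
    (hker : ker A ≤ ker C) : A ∘ₗ B ∘ₗ C.adjoint = C.adjoint := by
  have h := congrArg adjoint (comp_comp_pinv_eq_of_ker_le hA hABA hAB hker)
  rwa [adjoint_comp, hAB] at h

theorem LinearMap.comp_pinv_comp_adjoint_eq_conj [FiniteDimensional 𝕂 F]
    (hA : A.adjoint = A)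
    (hABA : A ∘ₗ B ∘ₗ A = A) (hAB : (A ∘ₗ B).adjoint = A ∘ₗ B) {C : E →ₗ[𝕂] F}
    (hker : ker A ≤ ker C) :
    C ∘ₗ B ∘ₗ C.adjoint = (B ∘ₗ C.adjoint).adjoint ∘ₗ A ∘ₗ B ∘ₗ C.adjoint := by
  have hBA : B.adjoint ∘ₗ A = A ∘ₗ B := by rw [← hAB, adjoint_comp, hA]
  calc C ∘ₗ B ∘ₗ C.adjoint = (C ∘ₗ A ∘ₗ B) ∘ₗ B ∘ₗ C.adjoint := by
        rw [comp_comp_pinv_eq_of_ker_le hA hABA hAB hker]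
    _ = C ∘ₗ (B.adjoint ∘ₗ A) ∘ₗ B ∘ₗ C.adjoint := by rw [hBA]; rfl
    _ = (B ∘ₗ C.adjoint).adjoint ∘ₗ A ∘ₗ B ∘ₗ C.adjoint := by
        rw [adjoint_comp, adjoint_adjoint]; rfl

theorem LinearMap.comp_pinv_eq_of_comp_eq (hA : A.adjoint = A) (hBAB : B ∘ₗ A ∘ₗ B = B)
    (hBA : (B ∘ₗ A).adjoint = B ∘ₗ A) {P : E →ₗ[𝕂] E} (hP : P ∘ₗ A = A) : P ∘ₗ B = B := by
  have hB : B = A ∘ₗ B.adjoint ∘ₗ B := by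
    rw [← comp_assoc, ← hA, ← adjoint_comp, hBA, comp_assoc, hBAB]
  rw [hB, ← comp_assoc, hP]

end Pseudoinverse

end InnerProduct

section ZProblem

variable {𝕂 : Type*} [RCLike 𝕂] {H : Type*} [NormedAddCommGroup H] [InnerProductSpace 𝕂 H]
  {P0 P1 σ : H →ₗ[𝕂] H}

local notation "⟪" x ", " y "⟫" => inner 𝕂 x y

theorem inner_add_map_add_eq_blocks (hP0 : P0.IsSymmetric) (hP1 : P1.IsSymmetric) {x y : H}
    (hx : P0 x = x) (hy : P1 y = y) :
    ⟪x + y, σ (x + y)⟫ = ⟪x, (P0 ∘ₗ σ ∘ₗ P0) x⟫ + ⟪x, (P0 ∘ₗ σ ∘ₗ P1) y⟫ +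
      ⟪y, (P1 ∘ₗ σ ∘ₗ P0) x⟫ + ⟪y, (P1 ∘ₗ σ ∘ₗ P1) y⟫ := by
  conv_lhs => rw [← hx, ← hy]
  simp only [map_add, inner_add_left, inner_add_right, hP0 _ _, hP1 _ _, comp_apply]
  ring

variable [FiniteDimensional 𝕂 H] (B : H →ₗ[𝕂] H)

theorem gschurLM_eq_sub_comp_adjoint (hσ01 : (P0 ∘ₗ σ ∘ₗ P1).adjoint = P1 ∘ₗ σ ∘ₗ P0) :
    gschurLM P0 P1 σ B =
      P0 ∘ₗ σ ∘ₗ P0 - (P0 ∘ₗ σ ∘ₗ P1) ∘ₗ B ∘ₗ (P0 ∘ₗ σ ∘ₗ P1).adjoint := by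
  rw [gschurLM, hσ01]

theorem inner_gschurLM_apply (hσ01 : (P0 ∘ₗ σ ∘ₗ P1).adjoint = P1 ∘ₗ σ ∘ₗ P0) (x : H) :
    ⟪x, gschurLM P0 P1 σ B x⟫ =
      ⟪x, (P0 ∘ₗ σ ∘ₗ P0) x⟫ - ⟪(P1 ∘ₗ σ ∘ₗ P0) x, B ((P1 ∘ₗ σ ∘ₗ P0) x)⟫ := by
  rw [gschurLM, LinearMap.sub_apply, inner_sub_right, comp_apply (P0 ∘ₗ σ ∘ₗ P1),
    ← adjoint_inner_left (P0 ∘ₗ σ ∘ₗ P1), hσ01]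
  rfl

theorem re_inner_add_map_add_eq_gschurLM (hP0 : P0.IsSymmetric) (hP1 : P1.IsSymmetric)
    (hσ11 : (P1 ∘ₗ σ ∘ₗ P1).IsSymmetric) (hσ01 : (P0 ∘ₗ σ ∘ₗ P1).adjoint = P1 ∘ₗ σ ∘ₗ P0)
    {x y : H} (hb : (P1 ∘ₗ σ ∘ₗ P1) (B ((P1 ∘ₗ σ ∘ₗ P0) x)) = (P1 ∘ₗ σ ∘ₗ P0) x)
    (hx : P0 x = x) (hy : P1 y = y) :
    re ⟪x + y, σ (x + y)⟫ = re ⟪x, gschurLM P0 P1 σ B x⟫ +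
      re ⟪y + B ((P1 ∘ₗ σ ∘ₗ P0) x), (P1 ∘ₗ σ ∘ₗ P1) (y + B ((P1 ∘ₗ σ ∘ₗ P0) x))⟫ := by
  rw [inner_add_map_add_eq_blocks hP0 hP1 hx hy, inner_gschurLM_apply B hσ01,
    hσ11.re_inner_add_apply_add hb, ← adjoint_inner_left (P0 ∘ₗ σ ∘ₗ P1) y x, hσ01]
  simp only [map_add, map_sub]
  rw [inner_re_symm (𝕜 := 𝕂) ((P1 ∘ₗ σ ∘ₗ P0) x) y]
  ring

end ZProblem

theorem stmt_12_general
    {𝕂 : Type*} [RCLike 𝕂]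
    {H : Type*} [NormedAddCommGroup H] [InnerProductSpace 𝕂 H] [FiniteDimensional 𝕂 H]
    (P0 P1 : H →ₗ[𝕂] H)
    (hP0sa : LinearMap.adjoint P0 = P0)
    (hP1 : P1 ∘ₗ P1 = P1) (hP1sa : LinearMap.adjoint P1 = P1)
    (σ : H →ₗ[𝕂] H)
    (hσ00 : LinearMap.adjoint (P0 ∘ₗ (σ ∘ₗ P0)) = P0 ∘ₗ (σ ∘ₗ P0))
    (hσ11 : LinearMap.adjoint (P1 ∘ₗ (σ ∘ₗ P1)) = P1 ∘ₗ (σ ∘ₗ P1))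
    (hσ01 : LinearMap.adjoint (P0 ∘ₗ (σ ∘ₗ P1)) = P1 ∘ₗ (σ ∘ₗ P0))
    (hker : LinearMap.ker (P1 ∘ₗ (σ ∘ₗ P1)) ≤ LinearMap.ker (P0 ∘ₗ (σ ∘ₗ P1)))
    (hpos11 : ∀ x : H, 0 ≤ RCLike.re (inner 𝕂 x ((P1 ∘ₗ (σ ∘ₗ P1)) x) : 𝕂))
    (B : H →ₗ[𝕂] H)
    (hB1 : B ∘ₗ ((P1 ∘ₗ (σ ∘ₗ P1)) ∘ₗ B) = B)
    (hB2 : (P1 ∘ₗ (σ ∘ₗ P1)) ∘ₗ (B ∘ₗ (P1 ∘ₗ (σ ∘ₗ P1))) = P1 ∘ₗ (σ ∘ₗ P1))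
    (hB3 : LinearMap.adjoint (B ∘ₗ (P1 ∘ₗ (σ ∘ₗ P1))) = B ∘ₗ (P1 ∘ₗ (σ ∘ₗ P1)))
    (hB4 : LinearMap.adjoint ((P1 ∘ₗ (σ ∘ₗ P1)) ∘ₗ B) = (P1 ∘ₗ (σ ∘ₗ P1)) ∘ₗ B) :
    LinearMap.adjoint (gschurLM P0 P1 σ B) = gschurLM P0 P1 σ B ∧
    (∀ E₀ : H, P0 E₀ = E₀ →
      IsLeast {r : ℝ | ∃ E : H, P1 E = E ∧ r = RCLike.re (inner 𝕂 (E₀ + E) (σ (E₀ + E)) : 𝕂)}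
        (RCLike.re (inner 𝕂 E₀ (gschurLM P0 P1 σ B E₀) : 𝕂)) ∧
      (∀ E : H, P1 E = E →
        (RCLike.re (inner 𝕂 (E₀ + E) (σ (E₀ + E)) : 𝕂) =
            RCLike.re (inner 𝕂 E₀ (gschurLM P0 P1 σ B E₀) : 𝕂) ↔
          ∃ K : H, P1 K = K ∧ (P1 ∘ₗ (σ ∘ₗ P1)) K = 0 ∧
            E = -(B ((P1 ∘ₗ (σ ∘ₗ P0)) E₀)) + K))) ∧
    (∀ z : H, RCLike.re (inner 𝕂 z (gschurLM P0 P1 σ B z) : 𝕂) ≤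
      RCLike.re (inner 𝕂 z ((P0 ∘ₗ (σ ∘ₗ P0)) z) : 𝕂)) := by
  have hsymm : ∀ T : H →ₗ[𝕂] H, T.adjoint = T → T.IsSymmetric :=
    fun T hT => (isSymmetric_iff_isSelfAdjoint T).mpr hT
  have hApos : (P1 ∘ₗ σ ∘ₗ P1).IsPositive :=
    ⟨hsymm _ hσ11, fun x => by rw [inner_re_symm]; exact hpos11 x⟩
  have hb (x : H) : (P1 ∘ₗ σ ∘ₗ P1) (B ((P1 ∘ₗ σ ∘ₗ P0) x)) = (P1 ∘ₗ σ ∘ₗ P0) x := by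
    rw [← hσ01]
    exact LinearMap.congr_fun (comp_pinv_comp_adjoint_eq_adjoint hσ11 hB2 hB4 hker) x
  have hP1B : P1 ∘ₗ B = B := comp_pinv_eq_of_comp_eq hσ11 hB1 hB3 (by rw [← comp_assoc, hP1])
  have hcorr : ((P0 ∘ₗ σ ∘ₗ P1) ∘ₗ B ∘ₗ (P0 ∘ₗ σ ∘ₗ P1).adjoint).IsPositive := by
    rw [comp_pinv_comp_adjoint_eq_conj hσ11 hB2 hB4 hker]
    exact hApos.adjoint_conj _
  refine ⟨?_, fun E₀ hE₀ => ?_, fun z => ?_⟩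
  · rw [gschurLM_eq_sub_comp_adjoint B hσ01, map_sub, hσ00, hcorr.adjoint_eq]
  · exact hApos.isLeast_and_eq_iff (LinearMap.congr_fun hP1B _) fun E hE =>
      re_inner_add_map_add_eq_gschurLM B (hsymm _ hP0sa) (hsymm _ hP1sa) hApos.isSymmetric hσ01
        (hb E₀) hE₀ hE
  · rw [gschurLM_eq_sub_comp_adjoint B hσ01, LinearMap.sub_apply, inner_sub_right, map_sub,
      sub_le_self_iff]
    exact hcorr.re_inner_nonneg_right z

/-- Generalized Dirichlet minimization principle for a Z-problem
`(H, 𝒰, ℰ, 𝒥, σ)` on a finite-dimensional Hilbert space (encoded by mutually orthogonal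
projections `P0, P1, P2` with sum `1` and ranges `𝒰, ℰ, 𝒥`): if the compression of `σ` to
`𝒰 ⊕ ℰ` is self-adjoint, `ker σ₁₁ ⊆ ker σ₀₁` and `σ₁₁ ≥ 0`, then with `B = σ₁₁⁺` and
`σ⁎ = σ₀₀ - σ₀₁σ₁₁⁺σ₁₀`: `σ⁎` is self-adjoint, `⟨E₀, σ⁎E₀⟩` is the minimum of
`⟨E₀+E, σ(E₀+E)⟩` over `E ∈ ℰ`, the set of minimizers is
`{-σ₁₁⁺σ₁₀E₀ + K : K ∈ ker σ₁₁}`, and `σ⁎ ≤ σ₀₀`. -/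
theorem stmt_12
    {𝕂 : Type*} [RCLike 𝕂]
    {H : Type*} [NormedAddCommGroup H] [InnerProductSpace 𝕂 H] [FiniteDimensional 𝕂 H]
    (P0 P1 P2 : H →ₗ[𝕂] H)
    (hP0 : P0 ∘ₗ P0 = P0) (hP0sa : LinearMap.adjoint P0 = P0)
    (hP1 : P1 ∘ₗ P1 = P1) (hP1sa : LinearMap.adjoint P1 = P1)
    (hP2 : P2 ∘ₗ P2 = P2) (hP2sa : LinearMap.adjoint P2 = P2)
    (h01 : P0 ∘ₗ P1 = 0) (h02 : P0 ∘ₗ P2 = 0) (h12 : P1 ∘ₗ P2 = 0)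
    (hsum : P0 + P1 + P2 = 1)
    (σ : H →ₗ[𝕂] H)
    (hσ00 : LinearMap.adjoint (P0 ∘ₗ (σ ∘ₗ P0)) = P0 ∘ₗ (σ ∘ₗ P0))
    (hσ11 : LinearMap.adjoint (P1 ∘ₗ (σ ∘ₗ P1)) = P1 ∘ₗ (σ ∘ₗ P1))
    (hσ01 : LinearMap.adjoint (P0 ∘ₗ (σ ∘ₗ P1)) = P1 ∘ₗ (σ ∘ₗ P0))
    (hker : LinearMap.ker (P1 ∘ₗ (σ ∘ₗ P1)) ≤ LinearMap.ker (P0 ∘ₗ (σ ∘ₗ P1)))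
    (hpos11 : ∀ x : H, 0 ≤ RCLike.re (inner 𝕂 x ((P1 ∘ₗ (σ ∘ₗ P1)) x) : 𝕂))
    (B : H →ₗ[𝕂] H)
    (hB1 : B ∘ₗ ((P1 ∘ₗ (σ ∘ₗ P1)) ∘ₗ B) = B)
    (hB2 : (P1 ∘ₗ (σ ∘ₗ P1)) ∘ₗ (B ∘ₗ (P1 ∘ₗ (σ ∘ₗ P1))) = P1 ∘ₗ (σ ∘ₗ P1))
    (hB3 : LinearMap.adjoint (B ∘ₗ (P1 ∘ₗ (σ ∘ₗ P1))) = B ∘ₗ (P1 ∘ₗ (σ ∘ₗ P1)))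
    (hB4 : LinearMap.adjoint ((P1 ∘ₗ (σ ∘ₗ P1)) ∘ₗ B) = (P1 ∘ₗ (σ ∘ₗ P1)) ∘ₗ B) :
    LinearMap.adjoint (gschurLM P0 P1 σ B) = gschurLM P0 P1 σ B ∧
    (∀ E₀ : H, P0 E₀ = E₀ →
      IsLeast {r : ℝ | ∃ E : H, P1 E = E ∧ r = RCLike.re (inner 𝕂 (E₀ + E) (σ (E₀ + E)) : 𝕂)}
        (RCLike.re (inner 𝕂 E₀ (gschurLM P0 P1 σ B E₀) : 𝕂)) ∧
      (∀ E : H, P1 E = E →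
        (RCLike.re (inner 𝕂 (E₀ + E) (σ (E₀ + E)) : 𝕂) =
            RCLike.re (inner 𝕂 E₀ (gschurLM P0 P1 σ B E₀) : 𝕂) ↔
          ∃ K : H, P1 K = K ∧ (P1 ∘ₗ (σ ∘ₗ P1)) K = 0 ∧
            E = -(B ((P1 ∘ₗ (σ ∘ₗ P0)) E₀)) + K))) ∧
    (∀ z : H, RCLike.re (inner 𝕂 z (gschurLM P0 P1 σ B z) : 𝕂) ≤
      RCLike.re (inner 𝕂 z ((P0 ∘ₗ (σ ∘ₗ P0)) z) : 𝕂)) :=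
  stmt_12_general P0 P1 hP0sa hP1 hP1sa σ hσ00 hσ11 hσ01 hker hpos11 B hB1 hB2 hB3 hB4
end

section
/- Let (H, 𝒰, ℰ, 𝒥, σ) be a Z-problem with dim H < ∞, σ self-adjoint, and suppose: (b) ker σ₁₁ ⊆ ker σ₀₁ ∩ ker σ₂₁; (c) every x₀ + x₂ with x₀ ∈ 𝒰, x₂ ∈ 𝒥 that is annihilated by all four generalized Schur-complement blocks, i.e. (σ₀₀ − σ₀₁σ₁₁⁺σ₁₀)x₀ + (σ₀₂ − σ₀₁σ₁₁⁺σ₁₂)x₂ = 0 and (σ₂₀ − σ₂₁σ₁₁⁺σ₁₀)x₀ + (σ₂₂ − σ₂₁σ₁₁⁺σ₁₂)x₂ = 0, also satisfies σ₁₀x₀ + σ₁₂x₂ = 0; (d) ker (σ⁺)₂₂ ⊆ ker (σ⁺)₀₂; and (e) ker((σ⁺)₀₀ − (σ⁺)₀₂((σ⁺)₂₂)⁺(σ⁺)₂₀) ⊆ ker (σ⁺)₂₀. Then (σ⁺)₀₀ − (σ⁺)₀₂((σ⁺)₂₂)⁺(σ⁺)₂₀ = (σ₀₀ − σ₀₁σ₁₁⁺σ₁₀)⁺,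 i.e. the dual effective operator computed from σ⁺ is the Moore–Penrose pseudoinverse of the effective operator computed from σ. -/
structure IsMoorePenroseInverse {R : Type*} [Mul R] [Star R] (a x : R) : Prop where
  mul_inv_mul : a * x * a = a
  inv_mul_inv : x * a * x = x
  isSelfAdjoint_mul_inv : IsSelfAdjoint (a * x)
  isSelfAdjoint_inv_mul : IsSelfAdjoint (x * a)

namespace IsMoorePenroseInverse

variable {R : Type*} [Ring R] [StarRing R] {a b x y p : R}

protected theorem symm (h : IsMoorePenroseInverse a x) : IsMoorePenroseInverse x a :=
  ⟨h.inv_mul_inv, h.mul_inv_mul, h.isSelfAdjoint_inv_mul, h.isSelfAdjoint_mul_inv⟩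

protected theorem star (h : IsMoorePenroseInverse a x) :
    IsMoorePenroseInverse (star a) (star x) where
  mul_inv_mul := by rw [← star_mul, ← star_mul, ← mul_assoc, h.mul_inv_mul]
  inv_mul_inv := by rw [← star_mul, ← star_mul, ← mul_assoc, h.inv_mul_inv]
  isSelfAdjoint_mul_inv := by
    rw [← star_mul]; exact IsSelfAdjoint.star_iff.mpr h.isSelfAdjoint_inv_mul
  isSelfAdjoint_inv_mul := by
    rw [← star_mul]; exact IsSelfAdjoint.star_iff.mpr h.isSelfAdjoint_mul_inv

theorem unique (hx : IsMoorePenroseInverse a x) (hy : IsMoorePenroseInverse a y) : x = y := by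
  have hax : a * x = a * y := calc
    a * x = a * y * (a * x) := by rw [← mul_assoc, hy.mul_inv_mul]
    _ = star (a * x * (a * y)) := by
      rw [star_mul, hx.isSelfAdjoint_mul_inv.star_eq, hy.isSelfAdjoint_mul_inv.star_eq]
    _ = a * y := by rw [← mul_assoc, hx.mul_inv_mul, hy.isSelfAdjoint_mul_inv.star_eq]
  have hxa : x * a = y * a := calc
    x * a = x * a * (y * a) := by rw [mul_assoc x a, ← mul_assoc a y, hy.mul_inv_mul]
    _ = star (y * a * (x * a)) := by
      rw [star_mul, hx.isSelfAdjoint_inv_mul.star_eq, hy.isSelfAdjoint_inv_mul.star_eq]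
    _ = y * a := by
      rw [mul_assoc y a, ← mul_assoc a x, hx.mul_inv_mul, hy.isSelfAdjoint_inv_mul.star_eq]
  rw [← hx.inv_mul_inv, hxa, mul_assoc, hax, ← mul_assoc, hy.inv_mul_inv]

theorem isSelfAdjoint (h : IsMoorePenroseInverse a x) (ha : IsSelfAdjoint a) :
    IsSelfAdjoint x :=
  (ha.star_eq ▸ h.star).unique h

theorem mul_right_eq_of_mul_left_eq (h : IsMoorePenroseInverse a x) (hp : IsSelfAdjoint p)
    (hpa : p * a = a) : x * p = x := by
  have hax : a * x * p = a * x := by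
    rw [← star_star (a * x * p), star_mul, hp.star_eq, h.isSelfAdjoint_mul_inv.star_eq,
      ← mul_assoc, hpa, h.isSelfAdjoint_mul_inv.star_eq]
  rw [← h.inv_mul_inv, mul_assoc x a x, mul_assoc, hax]

theorem mul_left_eq_of_mul_right_eq (h : IsMoorePenroseInverse a x) (hp : IsSelfAdjoint p)
    (hap : a * p = a) : p * x = x := by
  have := h.star.mul_right_eq_of_mul_left_eq hp (by rw [← hp.star_eq, ← star_mul, hap])
  simpa only [star_mul, star_star, hp.star_eq] using congrArg star this

theorem mul_eq_self_of_compress (h : IsMoorePenroseInverse (p * a * p) x) (hp : IsSelfAdjoint p)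
    (hpp : IsIdempotentElem p) : p * x = x ∧ x * p = x :=
  ⟨h.mul_left_eq_of_mul_right_eq hp (by rw [mul_assoc, hpp.eq]),
    h.mul_right_eq_of_mul_left_eq hp (by rw [← mul_assoc, ← mul_assoc, hpp.eq])⟩

protected theorem add (h : IsMoorePenroseInverse a x) (h' : IsMoorePenroseInverse b y)
    (hay : a * y = 0) (hya : y * a = 0) (hxb : x * b = 0) (hbx : b * x = 0) :
    IsMoorePenroseInverse (a + b) (x + y) := by
  have hl : (a + b) * (x + y) = a * x + b * y := by
    simp only [mul_add, add_mul, hay, hbx, add_zero, zero_add]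
  have hr : (x + y) * (a + b) = x * a + y * b := by
    simp only [mul_add, add_mul, hxb, hya, add_zero, zero_add]
  refine ⟨?_, ?_, hl ▸ h.isSelfAdjoint_mul_inv.add h'.isSelfAdjoint_mul_inv,
    hr ▸ h.isSelfAdjoint_inv_mul.add h'.isSelfAdjoint_inv_mul⟩
  · rw [hl, mul_add, add_mul, add_mul, mul_assoc a x b, hxb, mul_assoc b y a, hya,
      h.mul_inv_mul, h'.mul_inv_mul, mul_zero, mul_zero, add_zero, zero_add]
  · rw [hr, mul_add, add_mul, add_mul, mul_assoc x a y, hay, mul_assoc y b x, hbx,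
      h.inv_mul_inv, h'.inv_mul_inv, mul_zero, mul_zero, add_zero, zero_add]

theorem units_mul_mul (h : IsMoorePenroseInverse a x) (u v : Rˣ)
    (hu : Commute (u : R) (a * x)) (hv : Commute (v : R) (x * a)) :
    IsMoorePenroseInverse (u * a * v) (↑v⁻¹ * x * ↑u⁻¹) := by
  have hv' := hv.units_inv_left
  have hl : u * a * v * (↑v⁻¹ * x * ↑u⁻¹) = a * x := calc
    _ = u * (a * x) * ↑u⁻¹ := by simp only [mul_assoc, Units.mul_inv_cancel_left]
    _ = a * x := by rw [hu.eq, mul_assoc, Units.mul_inv, mul_one]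
  have hr : ↑v⁻¹ * x * ↑u⁻¹ * (u * a * v) = x * a := calc
    _ = ↑v⁻¹ * (x * a) * v := by simp only [mul_assoc, Units.inv_mul_cancel_left]
    _ = x * a := by rw [hv'.eq, mul_assoc, Units.inv_mul, mul_one]
  refine ⟨?_, ?_, hl ▸ h.isSelfAdjoint_mul_inv, hr ▸ h.isSelfAdjoint_inv_mul⟩
  · calc u * a * v * (↑v⁻¹ * x * ↑u⁻¹) * (u * a * v) = a * x * u * a * v := by
          rw [hl]; simp only [mul_assoc]
      _ = u * (a * x * a) * v := by rw [← hu.eq]; simp only [mul_assoc]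
      _ = u * a * v := by rw [h.mul_inv_mul, mul_assoc]
  · calc ↑v⁻¹ * x * ↑u⁻¹ * (u * a * v) * (↑v⁻¹ * x * ↑u⁻¹) = x * a * ↑v⁻¹ * x * ↑u⁻¹ := by
          rw [hr]; simp only [mul_assoc]
      _ = ↑v⁻¹ * (x * a * x) * ↑u⁻¹ := by rw [← hv'.eq]; simp only [mul_assoc]
      _ = ↑v⁻¹ * x * ↑u⁻¹ := by rw [h.inv_mul_inv]

end IsMoorePenroseInverse

theorem mul_eq_zero_of_mul_right_eq_of_mul_left_eq {S : Type*} [SemigroupWithZero S]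
    {x y p q : S} (hx : x * p = x) (hy : q * y = y) (hpq : p * q = 0) : x * y = 0 := by
  rw [← hx, ← hy, mul_assoc, ← mul_assoc p, hpq, zero_mul, mul_zero]

theorem mul_mul_mul_mul_eq {S : Type*} [Semigroup S] {a b p x a' b' : S} (ha : a * p = a')
    (hb : p * b = b') : a * (p * x * p) * b = a' * x * b' := by
  rw [← ha, ← hb]; simp only [mul_assoc]

section Ring

variable {R : Type*} [Ring R]

/-- With `dp = m_qq⁺`, the block `p * schurCompl q m dp * r` is `m_pr - m_pq m_qq⁺ m_qr`. -/
def schurCompl (q m dp : R) : R := m - m * q * dp * (q * m)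

theorem mul_schurCompl_mul (p q r m dp : R) :
    p * schurCompl q m dp * r = p * m * r - p * m * q * dp * (q * m * r) := by
  rw [schurCompl]; noncomm_ring

theorem one_add_mul_add_mul_one_add_eq {z d dp b c : R} (hzdp : z * dp = 0) (hdpz : dp * z = 0)
    (hdpd : dp * d * dp = dp) (hbd : b * dp * d = b) (hdc : d * dp * c = c) :
    (1 + b * dp) * (z + d) * (1 + dp * c) = z + b * dp * c + b + c + d := calc
  _ = z + d + z * dp * c + d * dp * c + b * (dp * z) + b * dp * d
        + b * (dp * z) * dp * c + b * (dp * d * dp) * c := by noncomm_ring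
  _ = z + b * dp * c + b + c + d := by rw [hzdp, hdpz, hdpd, hbd, hdc]; noncomm_ring

variable [StarRing R]

theorem IsSelfAdjoint.schurCompl {q m dp : R} (hq : IsSelfAdjoint q) (hm : IsSelfAdjoint m)
    (hdp : IsSelfAdjoint dp) : IsSelfAdjoint (schurCompl q m dp) := by
  simp only [_root_.schurCompl, IsSelfAdjoint, star_sub, star_mul, hq.star_eq, hm.star_eq,
    hdp.star_eq, mul_assoc]

theorem IsMoorePenroseInverse.banachiewicz_schur {z y d dp b : R}
    (hz : IsSelfAdjoint z) (hd : IsSelfAdjoint d)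
    (hzy : IsMoorePenroseInverse z y) (hddp : IsMoorePenroseInverse d dp)
    (hzdp : z * dp = 0) (hdpz : dp * z = 0) (hyd : y * d = 0) (hdy : d * y = 0)
    (hdpb : dp * b = 0) (hbd : b * dp * d = b) (hzyb : z * y * b = b) :
    IsMoorePenroseInverse (z + b * dp * star b + b + star b + d)
      ((1 - dp * star b) * (y + dp) * (1 - b * dp)) := by
  have hdp : IsSelfAdjoint dp := hddp.isSelfAdjoint hd
  have hdb : d * dp * star b = star b := by
    simpa only [star_mul, hd.star_eq, hdp.star_eq, mul_assoc] using congrArg star hbd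
  have hnn : b * dp * (b * dp) = 0 := by rw [mul_assoc, ← mul_assoc dp, hdpb, zero_mul, mul_zero]
  let u : Rˣ := ⟨1 + b * dp, 1 - b * dp,
    by rw [show (1 + b * dp) * (1 - b * dp) = 1 - b * dp * (b * dp) by noncomm_ring, hnn,
      sub_zero],
    by rw [show (1 - b * dp) * (1 + b * dp) = 1 - b * dp * (b * dp) by noncomm_ring, hnn,
      sub_zero]⟩
  have hu : (u : R) = 1 + b * dp := rfl
  have hstar_u : ((star u : Rˣ) : R) = 1 + dp * star b := by
    rw [Units.coe_star, hu, star_add, star_one, star_mul, hdp.star_eq]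
  have hstar_u_inv : ((star u)⁻¹ : Rˣ) = (1 - dp * star b : R) := by
    rw [Units.coe_star_inv, show ((u⁻¹ : Rˣ) : R) = 1 - b * dp from rfl, star_sub, star_one,
      star_mul, hdp.star_eq]
  have hm : z + b * dp * star b + b + star b + d = u * (z + d) * ↑(star u) := by
    rw [hstar_u, hu, one_add_mul_add_mul_one_add_eq hzdp hdpz hddp.inv_mul_inv hbd hdb]
  have he : (z + d) * (y + dp) = z * y + d * dp := by
    simp only [mul_add, add_mul, hzdp, hdy, add_zero, zero_add]
  have hw := hzy.add hddp hzdp hdpz hyd hdy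
  have hcomm : Commute (u : R) ((z + d) * (y + dp)) := by
    change (u : R) * _ = _ * (u : R)
    calc (u : R) * ((z + d) * (y + dp))
      _ = z * y + d * dp + b * (dp * z) * y + b * (dp * d * dp) := by rw [he, hu]; noncomm_ring
      _ = z * y + d * dp + z * y * b * dp + d * (dp * b) * dp := by
        rw [hdpz, hddp.inv_mul_inv, hzyb, hdpb]; noncomm_ring
      _ = (z + d) * (y + dp) * u := by rw [he, hu]; noncomm_ring
  have hcomm' : Commute (↑(star u) : R) ((y + dp) * (z + d)) := by
    have hvw : (y + dp) * (z + d) = (z + d) * (y + dp) := by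
      rw [← hw.isSelfAdjoint_mul_inv.star_eq, star_mul, star_add, star_add,
        (hzy.isSelfAdjoint hz).star_eq, hdp.star_eq, hz.star_eq, hd.star_eq]
    have := hcomm.star_star
    rwa [hw.isSelfAdjoint_mul_inv.star_eq, ← Units.coe_star, ← hvw] at this
  have := hw.units_mul_mul u (star u) hcomm hcomm'
  rwa [← hm, hstar_u_inv] at this

theorem IsMoorePenroseInverse.of_schurCompl {p m dp y : R} (hp : IsSelfAdjoint p)
    (hpp : IsIdempotentElem p) (hm : IsSelfAdjoint m)
    (hd : IsMoorePenroseInverse ((1 - p) * m * (1 - p)) dp)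
    (hy : IsMoorePenroseInverse (p * schurCompl (1 - p) m dp * p) y)
    (hbd : p * m * (1 - p) * dp * ((1 - p) * m * (1 - p)) = p * m * (1 - p))
    (hzb : (1 - p) * m * p * y * (p * schurCompl (1 - p) m dp * p) = (1 - p) * m * p) :
    IsMoorePenroseInverse m
      ((1 - dp * ((1 - p) * m * p)) * (y + dp) * (1 - p * m * (1 - p) * dp)) := by
  set q := 1 - p
  set z := p * schurCompl q m dp * p
  have hq : IsSelfAdjoint q := (IsSelfAdjoint.one R).sub hp
  have hqq : q * q = q := hpp.one_sub.eq
  have hpq : p * q = 0 := hpp.mul_one_sub_self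
  have hqp : q * p = 0 := hpp.one_sub_mul_self
  have hb : star (p * m * q) = q * m * p := by
    simp only [star_mul, hp.star_eq, hq.star_eq, hm.star_eq, mul_assoc]
  have hdsa : IsSelfAdjoint (q * m * q) := hm.conjugate_self hq
  have hdp : IsSelfAdjoint dp := hd.isSelfAdjoint hdsa
  have hzsa : IsSelfAdjoint z := (hq.schurCompl hm hdp).conjugate_self hp
  obtain ⟨hqdp, hdpq⟩ := hd.mul_eq_self_of_compress hq hpp.one_sub
  obtain ⟨hpy, hyp⟩ := hy.mul_eq_self_of_compress hp hpp
  have hpz : p * z = z := by simp only [z, ← mul_assoc, hpp.eq]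
  have hzp : z * p = z := by simp only [z, mul_assoc, hpp.eq]
  have hzyb : z * y * (p * m * q) = p * m * q := by
    simpa only [star_mul, hp.star_eq, hq.star_eq, hm.star_eq, (hy.isSelfAdjoint hzsa).star_eq,
      hzsa.star_eq, mul_assoc] using congrArg star hzb
  have hm_eq : z + p * m * q * dp * star (p * m * q) + p * m * q + star (p * m * q) + q * m * q
      = m := by
    rw [hb]
    calc _ = (p + q) * m * (p + q) := by simp only [z, schurCompl]; noncomm_ring
      _ = m := by rw [add_sub_cancel, one_mul, mul_one]
  have := hy.banachiewicz_schur hzsa hdsa hd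
    (mul_eq_zero_of_mul_right_eq_of_mul_left_eq hzp hqdp hpq)
    (mul_eq_zero_of_mul_right_eq_of_mul_left_eq hdpq hpz hqp)
    (mul_eq_zero_of_mul_right_eq_of_mul_left_eq hyp (by simp only [← mul_assoc, hqq]) hpq)
    (mul_eq_zero_of_mul_right_eq_of_mul_left_eq (by simp only [mul_assoc, hqq]) hpy hqp)
    (mul_eq_zero_of_mul_right_eq_of_mul_left_eq hdpq (by simp only [← mul_assoc, hpp.eq]) hqp)
    hbd hzyb
  rwa [hm_eq, hb] at this

theorem IsMoorePenroseInverse.compress_eq_of_schurCompl {p m g dp y : R}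
    (hg : IsMoorePenroseInverse m g) (hp : IsSelfAdjoint p) (hpp : IsIdempotentElem p)
    (hm : IsSelfAdjoint m) (hd : IsMoorePenroseInverse ((1 - p) * m * (1 - p)) dp)
    (hy : IsMoorePenroseInverse (p * schurCompl (1 - p) m dp * p) y)
    (hbd : p * m * (1 - p) * dp * ((1 - p) * m * (1 - p)) = p * m * (1 - p))
    (hzb : (1 - p) * m * p * y * (p * schurCompl (1 - p) m dp * p) = (1 - p) * m * p) :
    p * g * p = y := by
  obtain ⟨hqdp, hdpq⟩ := hd.mul_eq_self_of_compress ((IsSelfAdjoint.one R).sub hp) hpp.one_sub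
  obtain ⟨hpy, hyp⟩ := hy.mul_eq_self_of_compress hp hpp
  have hpdp : p * dp = 0 :=
    mul_eq_zero_of_mul_right_eq_of_mul_left_eq hpp.eq hqdp hpp.mul_one_sub_self
  have hdpp : dp * p = 0 :=
    mul_eq_zero_of_mul_right_eq_of_mul_left_eq hdpq hpp.eq hpp.one_sub_mul_self
  calc p * g * p
    _ = (p - p * dp * ((1 - p) * m * p)) * (y + dp) * (p - p * m * (1 - p) * (dp * p)) := by
        rw [hg.unique (.of_schurCompl hp hpp hm hd hy hbd hzb)]; noncomm_ring
    _ = p * (y + dp) * p := by rw [hpdp, hdpp]; noncomm_ring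
    _ = y := by rw [mul_add, add_mul, hpdp, zero_mul, add_zero, hpy, hyp]

end Ring

section Module

open LinearMap

variable {R M : Type*} [Ring R] [AddCommGroup M] [Module R M]

theorem LinearMap.comp_sub_comp_eq_mul_schurCompl_mul (p q r m dp : Module.End R M) :
    p ∘ₗ (m ∘ₗ r) - (p ∘ₗ (m ∘ₗ q)) ∘ₗ (dp ∘ₗ (q ∘ₗ (m ∘ₗ r))) = p * schurCompl q m dp * r := by
  rw [mul_schurCompl_mul]; rfl

theorem LinearMap.ker_inf_ker_le_ker_add {M₂ : Type*} [AddCommGroup M₂] [Module R M₂]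
    (f g : M →ₗ[R] M₂) : ker f ⊓ ker g ≤ ker (f + g) := fun x hx => by
  rw [mem_ker, add_apply, mem_ker.mp hx.1, mem_ker.mp hx.2, add_zero]

theorem mul_mul_eq_of_ker_le {a b x : Module.End R M} (hax : a * x * a = a)
    (hker : ker a ≤ ker b) : b * x * a = b := by
  ext v
  have hv : v - x (a v) ∈ ker a := by
    rw [mem_ker, map_sub, ← Module.End.mul_apply, ← Module.End.mul_apply, hax, sub_self]
  have := hker hv
  rwa [mem_ker, map_sub, sub_eq_zero, eq_comm] at this

theorem LinearMap.ker_le_of_blocks {p₀ p₂ s t : Module.End R M} (h₀ : IsIdempotentElem p₀)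
    (h₂ : IsIdempotentElem p₂) (h₀₂ : p₀ * p₂ = 0) (h₂₀ : p₂ * p₀ = 0)
    (h : ∀ x₀ x₂ : M, p₀ x₀ = x₀ → p₂ x₂ = x₂ →
      (p₀ * s * p₀) x₀ + (p₀ * s * p₂) x₂ = 0 → (p₂ * s * p₀) x₀ + (p₂ * s * p₂) x₂ = 0 →
      (t * p₀) x₀ + (t * p₂) x₂ = 0) :
    ker ((p₀ + p₂) * s * (p₀ + p₂)) ≤ ker (t * (p₀ + p₂)) := by
  intro x hx
  rw [mem_ker] at hx ⊢
  have hsplit (r : Module.End R M) : (r * p₀) (p₀ x) + (r * p₂) (p₂ x) = (r * (p₀ + p₂)) x := by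
    rw [← Module.End.mul_apply, ← Module.End.mul_apply, ← LinearMap.add_apply, mul_assoc, h₀.eq,
      mul_assoc, h₂.eq, mul_add]
  have hcompress {p : Module.End R M} (hp : p * (p₀ + p₂) = p) :
      (p * s * p₀) (p₀ x) + (p * s * p₂) (p₂ x) = 0 := by
    rw [hsplit, ← hp, mul_assoc, mul_assoc, Module.End.mul_apply, ← mul_assoc, hx, map_zero]
  rw [← hsplit]
  exact h _ _ (LinearMap.congr_fun h₀.eq x) (LinearMap.congr_fun h₂.eq x)
    (hcompress (by rw [mul_add, h₀.eq, h₀₂, add_zero]))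
    (hcompress (by rw [mul_add, h₂.eq, h₂₀, zero_add]))

end Module

section FiniteDimensional

open LinearMap

variable {𝕂 : Type*} [RCLike 𝕂] {H : Type*} [NormedAddCommGroup H] [InnerProductSpace 𝕂 H]
  [FiniteDimensional 𝕂 H]

theorem LinearMap.exists_isMoorePenroseInverse (T : Module.End 𝕂 H) :
    ∃ X, IsMoorePenroseInverse T X := by
  set K := (ker T)ᗮ
  set πK : Module.End 𝕂 H := (K.starProjection : H →ₗ[𝕂] H)
  set πR : Module.End 𝕂 H := ((range T).starProjection : H →ₗ[𝕂] H)
  have hTπK (v : H) : T (πK v) = T v := by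
    have : v - πK v ∈ ker T := by
      rw [← Submodule.orthogonal_orthogonal (ker T)]
      exact K.sub_starProjection_mem_orthogonal v
    rwa [mem_ker, map_sub, sub_eq_zero, eq_comm] at this
  obtain ⟨g, hg⟩ := (T.domRestrict K).exists_leftInverse_of_injective <|
    ker_eq_bot'.mpr fun a ha => Subtype.ext <|
      (Submodule.orthogonal_disjoint (ker T)).le_bot ⟨mem_ker.mpr ha, a.2⟩
  have hg_apply (v : H) : (g (T v) : H) = πK v := by
    rw [← hTπK]
    exact congrArg Subtype.val (LinearMap.congr_fun hg ⟨πK v, K.starProjection_apply_mem v⟩)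
  set X := K.subtype ∘ₗ g ∘ₗ πR
  have hXT : X * T = πK := by
    ext v
    simp [X, πR, Submodule.starProjection_eq_self_iff.mpr (mem_range_self T v), hg_apply]
  have hTX : T * X = πR := by
    ext v
    obtain ⟨w, hw⟩ : πR v ∈ range T := (range T).starProjection_apply_mem v
    simp [X, ← hw, hg_apply, hTπK]
  have hπK : IsSelfAdjoint πK := (isSymmetric_iff_isSelfAdjoint _).mp K.starProjection_isSymmetric
  have hπR : IsSelfAdjoint πR :=
    (isSymmetric_iff_isSelfAdjoint _).mp (range T).starProjection_isSymmetric
  refine ⟨X, ?_, ?_, hTX ▸ hπR, hXT ▸ hπK⟩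
  · ext v
    simp [hTX, πR, Submodule.starProjection_eq_self_iff.mpr (mem_range_self T v)]
  · rw [hXT]
    ext v
    simp [πK, X]

theorem IsMoorePenroseInverse.compress_of_ker_le {p m g dp : Module.End 𝕂 H}
    (hg : IsMoorePenroseInverse m g) (hp : IsSelfAdjoint p) (hpp : IsIdempotentElem p)
    (hm : IsSelfAdjoint m) (hd : IsMoorePenroseInverse ((1 - p) * m * (1 - p)) dp)
    (hkd : ker ((1 - p) * m * (1 - p)) ≤ ker (p * m * (1 - p)))
    (hkz : ker (p * schurCompl (1 - p) m dp * p) ≤ ker ((1 - p) * m * p)) :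
    IsMoorePenroseInverse (p * schurCompl (1 - p) m dp * p) (p * g * p) := by
  obtain ⟨y, hy⟩ := (p * schurCompl (1 - p) m dp * p).exists_isMoorePenroseInverse
  rwa [hg.compress_eq_of_schurCompl hp hpp hm hd hy (mul_mul_eq_of_ker_le hd.mul_inv_mul hkd)
    (mul_mul_eq_of_ker_le hy.mul_inv_mul hkz)]

theorem IsMoorePenroseInverse.compress_add_of_ker_le {p₀ p₂ g s c : Module.End 𝕂 H}
    (h : IsMoorePenroseInverse ((p₀ + p₂) * s * (p₀ + p₂)) ((p₀ + p₂) * g * (p₀ + p₂)))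
    (hp₀ : IsSelfAdjoint p₀) (hp₀₀ : IsIdempotentElem p₀) (hp₂ : IsSelfAdjoint p₂)
    (h₀₂ : p₀ * p₂ = 0) (hg : IsSelfAdjoint g) (hc : IsMoorePenroseInverse (p₂ * g * p₂) c)
    (hkd : ker (p₂ * g * p₂) ≤ ker (p₀ * g * p₂))
    (hkz : ker (p₀ * schurCompl p₂ g c * p₀) ≤ ker (p₂ * g * p₀)) :
    IsMoorePenroseInverse (p₀ * schurCompl p₂ g c * p₀) (p₀ * s * p₀) := by
  have h₂₀ : p₂ * p₀ = 0 := by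
    rw [← hp₀.star_eq, ← hp₂.star_eq, ← star_mul, h₀₂, star_zero]
  have h₀P : p₀ * (p₀ + p₂) = p₀ := by rw [mul_add, hp₀₀.eq, h₀₂, add_zero]
  have hP₀ : (p₀ + p₂) * p₀ = p₀ := by rw [add_mul, hp₀₀.eq, h₂₀, add_zero]
  have hqP : (1 - p₀) * (p₀ + p₂) = p₂ := by rw [sub_mul, one_mul, h₀P, add_sub_cancel_left]
  have hPq : (p₀ + p₂) * (1 - p₀) = p₂ := by rw [mul_sub, mul_one, hP₀, add_sub_cancel_left]
  have hz : p₀ * schurCompl (1 - p₀) ((p₀ + p₂) * g * (p₀ + p₂)) c * p₀ =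
      p₀ * schurCompl p₂ g c * p₀ := by
    rw [mul_schurCompl_mul, mul_schurCompl_mul, mul_mul_mul_mul_eq h₀P hP₀,
      mul_mul_mul_mul_eq h₀P hPq, mul_mul_mul_mul_eq hqP hP₀]
  rw [← hz, ← mul_mul_mul_mul_eq (x := s) h₀P hP₀]
  refine h.symm.compress_of_ker_le hp₀ hp₀₀ (hg.conjugate_self (hp₀.add hp₂)) ?_ ?_ ?_
  · rwa [mul_mul_mul_mul_eq hqP hPq]
  · rwa [mul_mul_mul_mul_eq hqP hPq, mul_mul_mul_mul_eq h₀P hPq]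
  · rwa [hz, mul_mul_mul_mul_eq hqP hP₀]

theorem LinearMap.isMoorePenroseInverse_iff {A X : H →ₗ[𝕂] H} :
    IsMoorePenroseInverse A X ↔ A ∘ₗ (X ∘ₗ A) = A ∧ X ∘ₗ (A ∘ₗ X) = X ∧
      adjoint (A ∘ₗ X) = A ∘ₗ X ∧ adjoint (X ∘ₗ A) = X ∘ₗ A :=
  ⟨fun ⟨h₁, h₂, h₃, h₄⟩ => ⟨h₁, h₂, h₃, h₄⟩, fun ⟨h₁, h₂, h₃, h₄⟩ => ⟨h₁, h₂, h₃, h₄⟩⟩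

end FiniteDimensional

theorem stmt_15_general
    {𝕂 : Type*} [RCLike 𝕂]
    {H : Type*} [NormedAddCommGroup H] [InnerProductSpace 𝕂 H] [FiniteDimensional 𝕂 H]
    (P0 P1 P2 : H →ₗ[𝕂] H)
    (hP0 : P0 ∘ₗ P0 = P0) (hP0sa : LinearMap.adjoint P0 = P0)
    (hP2 : P2 ∘ₗ P2 = P2) (hP2sa : LinearMap.adjoint P2 = P2)
    (h02 : P0 ∘ₗ P2 = 0)
    (hsum : P0 + P1 + P2 = 1)
    (σ : H →ₗ[𝕂] H) (hσsa : LinearMap.adjoint σ = σ)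
    -- `σp = σ⁺`, the Moore–Penrose pseudoinverse of `σ`
    (σp : H →ₗ[𝕂] H)
    (hσp1 : σp ∘ₗ (σ ∘ₗ σp) = σp) (hσp2 : σ ∘ₗ (σp ∘ₗ σ) = σ)
    (hσp3 : LinearMap.adjoint (σp ∘ₗ σ) = σp ∘ₗ σ)
    (hσp4 : LinearMap.adjoint (σ ∘ₗ σp) = σ ∘ₗ σp)
    -- `B = σ₁₁⁺`, the Moore–Penrose pseudoinverse of `σ₁₁ = P1 σ P1`
    (B : H →ₗ[𝕂] H)
    (hB1 : B ∘ₗ ((P1 ∘ₗ (σ ∘ₗ P1)) ∘ₗ B) = B)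
    (hB2 : (P1 ∘ₗ (σ ∘ₗ P1)) ∘ₗ (B ∘ₗ (P1 ∘ₗ (σ ∘ₗ P1))) = P1 ∘ₗ (σ ∘ₗ P1))
    (hB3 : LinearMap.adjoint (B ∘ₗ (P1 ∘ₗ (σ ∘ₗ P1))) = B ∘ₗ (P1 ∘ₗ (σ ∘ₗ P1)))
    (hB4 : LinearMap.adjoint ((P1 ∘ₗ (σ ∘ₗ P1)) ∘ₗ B) = (P1 ∘ₗ (σ ∘ₗ P1)) ∘ₗ B)
    -- `C = ((σ⁺)₂₂)⁺`, the Moore–Penrose pseudoinverse of `(σ⁺)₂₂ = P2 σ⁺ P2`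
    (C : H →ₗ[𝕂] H)
    (hC1 : C ∘ₗ ((P2 ∘ₗ (σp ∘ₗ P2)) ∘ₗ C) = C)
    (hC2 : (P2 ∘ₗ (σp ∘ₗ P2)) ∘ₗ (C ∘ₗ (P2 ∘ₗ (σp ∘ₗ P2))) = P2 ∘ₗ (σp ∘ₗ P2))
    (hC3 : LinearMap.adjoint (C ∘ₗ (P2 ∘ₗ (σp ∘ₗ P2))) = C ∘ₗ (P2 ∘ₗ (σp ∘ₗ P2)))
    (hC4 : LinearMap.adjoint ((P2 ∘ₗ (σp ∘ₗ P2)) ∘ₗ C) = (P2 ∘ₗ (σp ∘ₗ P2)) ∘ₗ C)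
    -- hypothesis (b): `ker σ₁₁ ⊆ ker σ₀₁ ∩ ker σ₂₁`
    (hb : LinearMap.ker (P1 ∘ₗ (σ ∘ₗ P1)) ≤
      LinearMap.ker (P0 ∘ₗ (σ ∘ₗ P1)) ⊓ LinearMap.ker (P2 ∘ₗ (σ ∘ₗ P1)))
    -- hypothesis (c): vectors `x₀ + x₂` annihilated by all four generalized
    -- Schur-complement blocks are annihilated by `σ₁₀ ⊕ σ₁₂`
    (hc : ∀ x₀ x₂ : H, P0 x₀ = x₀ → P2 x₂ = x₂ →
      gschurLM P0 P1 σ B x₀ +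
        ((P0 ∘ₗ (σ ∘ₗ P2)) - (P0 ∘ₗ (σ ∘ₗ P1)) ∘ₗ (B ∘ₗ (P1 ∘ₗ (σ ∘ₗ P2)))) x₂ = 0 →
      ((P2 ∘ₗ (σ ∘ₗ P0)) - (P2 ∘ₗ (σ ∘ₗ P1)) ∘ₗ (B ∘ₗ (P1 ∘ₗ (σ ∘ₗ P0)))) x₀ +
        ((P2 ∘ₗ (σ ∘ₗ P2)) - (P2 ∘ₗ (σ ∘ₗ P1)) ∘ₗ (B ∘ₗ (P1 ∘ₗ (σ ∘ₗ P2)))) x₂ = 0 →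
      (P1 ∘ₗ (σ ∘ₗ P0)) x₀ + (P1 ∘ₗ (σ ∘ₗ P2)) x₂ = 0)
    -- hypothesis (d): `ker (σ⁺)₂₂ ⊆ ker (σ⁺)₀₂`
    (hd : LinearMap.ker (P2 ∘ₗ (σp ∘ₗ P2)) ≤ LinearMap.ker (P0 ∘ₗ (σp ∘ₗ P2)))
    -- hypothesis (e): `ker ((σ⁺)₀₀ - (σ⁺)₀₂((σ⁺)₂₂)⁺(σ⁺)₂₀) ⊆ ker (σ⁺)₂₀`
    (he : LinearMap.ker
        ((P0 ∘ₗ (σp ∘ₗ P0)) - (P0 ∘ₗ (σp ∘ₗ P2)) ∘ₗ (C ∘ₗ (P2 ∘ₗ (σp ∘ₗ P0)))) ≤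
      LinearMap.ker (P2 ∘ₗ (σp ∘ₗ P0))) :
    -- conclusion: the dual effective operator is the Moore–Penrose pseudoinverse of the
    -- effective operator `S = σ₀₀ - σ₀₁σ₁₁⁺σ₁₀`
    (((P0 ∘ₗ (σp ∘ₗ P0)) - (P0 ∘ₗ (σp ∘ₗ P2)) ∘ₗ (C ∘ₗ (P2 ∘ₗ (σp ∘ₗ P0)))) ∘ₗ
        (gschurLM P0 P1 σ B ∘ₗ
          ((P0 ∘ₗ (σp ∘ₗ P0)) - (P0 ∘ₗ (σp ∘ₗ P2)) ∘ₗ (C ∘ₗ (P2 ∘ₗ (σp ∘ₗ P0))))) =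
      (P0 ∘ₗ (σp ∘ₗ P0)) - (P0 ∘ₗ (σp ∘ₗ P2)) ∘ₗ (C ∘ₗ (P2 ∘ₗ (σp ∘ₗ P0)))) ∧
    (gschurLM P0 P1 σ B ∘ₗ
        (((P0 ∘ₗ (σp ∘ₗ P0)) - (P0 ∘ₗ (σp ∘ₗ P2)) ∘ₗ (C ∘ₗ (P2 ∘ₗ (σp ∘ₗ P0)))) ∘ₗ
          gschurLM P0 P1 σ B) =
      gschurLM P0 P1 σ B) ∧
    (LinearMap.adjoint
        ((((P0 ∘ₗ (σp ∘ₗ P0)) - (P0 ∘ₗ (σp ∘ₗ P2)) ∘ₗ (C ∘ₗ (P2 ∘ₗ (σp ∘ₗ P0))))) ∘ₗ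
          gschurLM P0 P1 σ B) =
      (((P0 ∘ₗ (σp ∘ₗ P0)) - (P0 ∘ₗ (σp ∘ₗ P2)) ∘ₗ (C ∘ₗ (P2 ∘ₗ (σp ∘ₗ P0))))) ∘ₗ
        gschurLM P0 P1 σ B) ∧
    (LinearMap.adjoint
        (gschurLM P0 P1 σ B ∘ₗ
          (((P0 ∘ₗ (σp ∘ₗ P0)) - (P0 ∘ₗ (σp ∘ₗ P2)) ∘ₗ (C ∘ₗ (P2 ∘ₗ (σp ∘ₗ P0)))))) =
      gschurLM P0 P1 σ B ∘ₗ
        (((P0 ∘ₗ (σp ∘ₗ P0)) - (P0 ∘ₗ (σp ∘ₗ P2)) ∘ₗ (C ∘ₗ (P2 ∘ₗ (σp ∘ₗ P0)))))) := by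
  obtain rfl : P1 = 1 - (P0 + P2) := by rw [← hsum]; abel
  rw [← LinearMap.isSelfAdjoint_iff'] at hP0sa hP2sa hσsa
  simp only [gschurLM, LinearMap.comp_sub_comp_eq_mul_schurCompl_mul] at hc he ⊢
  simp only [← Module.End.mul_eq_comp, ← mul_assoc] at hP0 hP2 h02 hb hd he
  have h20 : P2 * P0 = 0 := by
    simpa only [star_mul, star_zero, hP0sa.star_eq, hP2sa.star_eq] using
      congrArg star h02
  have hσp := LinearMap.isMoorePenroseInverse_iff.mpr ⟨hσp2, hσp1, hσp4, hσp3⟩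
  have hS := hσp.compress_of_ker_le (hP0sa.add hP2sa)
    (IsIdempotentElem.add hP0 hP2 (by rw [h02, h20, add_zero]))
    hσsa (LinearMap.isMoorePenroseInverse_iff.mpr ⟨hB2, hB1, hB4, hB3⟩)
    (by rw [add_mul, add_mul]; exact hb.trans (LinearMap.ker_inf_ker_le_ker_add _ _))
    (LinearMap.ker_le_of_blocks hP0 hP2 h02 h20 hc)
  exact LinearMap.isMoorePenroseInverse_iff.mp <| hS.compress_add_of_ker_le hP0sa hP0 hP2sa h02
    (hσp.isSelfAdjoint hσsa) (LinearMap.isMoorePenroseInverse_iff.mpr ⟨hC2, hC1, hC4, hC3⟩) hd he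

/-- Duality of effective operators under relaxed hypotheses: the
Z-problem `(H, 𝒰, ℰ, 𝒥, σ)` on a finite-dimensional Hilbert space is encoded by mutually
orthogonal projections `P0, P1, P2` with sum `1` (ranges `𝒰, ℰ, 𝒥`); `σ` is self-adjoint,
`σp = σ⁺`, `B = σ₁₁⁺` and `C = ((σ⁺)₂₂)⁺` are Moore–Penrose pseudoinverses (characterized
by the four Penrose equations).  Under hypotheses (b)–(e) of the text, the dual effective
operator `(σ⁺)₀₀ - (σ⁺)₀₂((σ⁺)₂₂)⁺(σ⁺)₂₀` is the Moore–Penrose pseudoinverse of the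
effective operator `σ₀₀ - σ₀₁σ₁₁⁺σ₁₀` (stated via the four Penrose equations). -/
theorem stmt_15
    {𝕂 : Type*} [RCLike 𝕂]
    {H : Type*} [NormedAddCommGroup H] [InnerProductSpace 𝕂 H] [FiniteDimensional 𝕂 H]
    (P0 P1 P2 : H →ₗ[𝕂] H)
    (hP0 : P0 ∘ₗ P0 = P0) (hP0sa : LinearMap.adjoint P0 = P0)
    (hP1 : P1 ∘ₗ P1 = P1) (hP1sa : LinearMap.adjoint P1 = P1)
    (hP2 : P2 ∘ₗ P2 = P2) (hP2sa : LinearMap.adjoint P2 = P2)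
    (h01 : P0 ∘ₗ P1 = 0) (h02 : P0 ∘ₗ P2 = 0) (h12 : P1 ∘ₗ P2 = 0)
    (hsum : P0 + P1 + P2 = 1)
    (σ : H →ₗ[𝕂] H) (hσsa : LinearMap.adjoint σ = σ)
    -- `σp = σ⁺`, the Moore–Penrose pseudoinverse of `σ`
    (σp : H →ₗ[𝕂] H)
    (hσp1 : σp ∘ₗ (σ ∘ₗ σp) = σp) (hσp2 : σ ∘ₗ (σp ∘ₗ σ) = σ)
    (hσp3 : LinearMap.adjoint (σp ∘ₗ σ) = σp ∘ₗ σ)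
    (hσp4 : LinearMap.adjoint (σ ∘ₗ σp) = σ ∘ₗ σp)
    -- `B = σ₁₁⁺`, the Moore–Penrose pseudoinverse of `σ₁₁ = P1 σ P1`
    (B : H →ₗ[𝕂] H)
    (hB1 : B ∘ₗ ((P1 ∘ₗ (σ ∘ₗ P1)) ∘ₗ B) = B)
    (hB2 : (P1 ∘ₗ (σ ∘ₗ P1)) ∘ₗ (B ∘ₗ (P1 ∘ₗ (σ ∘ₗ P1))) = P1 ∘ₗ (σ ∘ₗ P1))
    (hB3 : LinearMap.adjoint (B ∘ₗ (P1 ∘ₗ (σ ∘ₗ P1))) = B ∘ₗ (P1 ∘ₗ (σ ∘ₗ P1)))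
    (hB4 : LinearMap.adjoint ((P1 ∘ₗ (σ ∘ₗ P1)) ∘ₗ B) = (P1 ∘ₗ (σ ∘ₗ P1)) ∘ₗ B)
    -- `C = ((σ⁺)₂₂)⁺`, the Moore–Penrose pseudoinverse of `(σ⁺)₂₂ = P2 σ⁺ P2`
    (C : H →ₗ[𝕂] H)
    (hC1 : C ∘ₗ ((P2 ∘ₗ (σp ∘ₗ P2)) ∘ₗ C) = C)
    (hC2 : (P2 ∘ₗ (σp ∘ₗ P2)) ∘ₗ (C ∘ₗ (P2 ∘ₗ (σp ∘ₗ P2))) = P2 ∘ₗ (σp ∘ₗ P2))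
    (hC3 : LinearMap.adjoint (C ∘ₗ (P2 ∘ₗ (σp ∘ₗ P2))) = C ∘ₗ (P2 ∘ₗ (σp ∘ₗ P2)))
    (hC4 : LinearMap.adjoint ((P2 ∘ₗ (σp ∘ₗ P2)) ∘ₗ C) = (P2 ∘ₗ (σp ∘ₗ P2)) ∘ₗ C)
    -- hypothesis (b): `ker σ₁₁ ⊆ ker σ₀₁ ∩ ker σ₂₁`
    (hb : LinearMap.ker (P1 ∘ₗ (σ ∘ₗ P1)) ≤
      LinearMap.ker (P0 ∘ₗ (σ ∘ₗ P1)) ⊓ LinearMap.ker (P2 ∘ₗ (σ ∘ₗ P1)))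
    -- hypothesis (c): vectors `x₀ + x₂` annihilated by all four generalized
    -- Schur-complement blocks are annihilated by `σ₁₀ ⊕ σ₁₂`
    (hc : ∀ x₀ x₂ : H, P0 x₀ = x₀ → P2 x₂ = x₂ →
      gschurLM P0 P1 σ B x₀ +
        ((P0 ∘ₗ (σ ∘ₗ P2)) - (P0 ∘ₗ (σ ∘ₗ P1)) ∘ₗ (B ∘ₗ (P1 ∘ₗ (σ ∘ₗ P2)))) x₂ = 0 →
      ((P2 ∘ₗ (σ ∘ₗ P0)) - (P2 ∘ₗ (σ ∘ₗ P1)) ∘ₗ (B ∘ₗ (P1 ∘ₗ (σ ∘ₗ P0)))) x₀ +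
        ((P2 ∘ₗ (σ ∘ₗ P2)) - (P2 ∘ₗ (σ ∘ₗ P1)) ∘ₗ (B ∘ₗ (P1 ∘ₗ (σ ∘ₗ P2)))) x₂ = 0 →
      (P1 ∘ₗ (σ ∘ₗ P0)) x₀ + (P1 ∘ₗ (σ ∘ₗ P2)) x₂ = 0)
    -- hypothesis (d): `ker (σ⁺)₂₂ ⊆ ker (σ⁺)₀₂`
    (hd : LinearMap.ker (P2 ∘ₗ (σp ∘ₗ P2)) ≤ LinearMap.ker (P0 ∘ₗ (σp ∘ₗ P2)))
    -- hypothesis (e): `ker ((σ⁺)₀₀ - (σ⁺)₀₂((σ⁺)₂₂)⁺(σ⁺)₂₀) ⊆ ker (σ⁺)₂₀`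
    (he : LinearMap.ker
        ((P0 ∘ₗ (σp ∘ₗ P0)) - (P0 ∘ₗ (σp ∘ₗ P2)) ∘ₗ (C ∘ₗ (P2 ∘ₗ (σp ∘ₗ P0)))) ≤
      LinearMap.ker (P2 ∘ₗ (σp ∘ₗ P0))) :
    -- conclusion: the dual effective operator is the Moore–Penrose pseudoinverse of the
    -- effective operator `S = σ₀₀ - σ₀₁σ₁₁⁺σ₁₀`
    (((P0 ∘ₗ (σp ∘ₗ P0)) - (P0 ∘ₗ (σp ∘ₗ P2)) ∘ₗ (C ∘ₗ (P2 ∘ₗ (σp ∘ₗ P0)))) ∘ₗ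
        (gschurLM P0 P1 σ B ∘ₗ
          ((P0 ∘ₗ (σp ∘ₗ P0)) - (P0 ∘ₗ (σp ∘ₗ P2)) ∘ₗ (C ∘ₗ (P2 ∘ₗ (σp ∘ₗ P0))))) =
      (P0 ∘ₗ (σp ∘ₗ P0)) - (P0 ∘ₗ (σp ∘ₗ P2)) ∘ₗ (C ∘ₗ (P2 ∘ₗ (σp ∘ₗ P0)))) ∧
    (gschurLM P0 P1 σ B ∘ₗ
        (((P0 ∘ₗ (σp ∘ₗ P0)) - (P0 ∘ₗ (σp ∘ₗ P2)) ∘ₗ (C ∘ₗ (P2 ∘ₗ (σp ∘ₗ P0)))) ∘ₗ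
          gschurLM P0 P1 σ B) =
      gschurLM P0 P1 σ B) ∧
    (LinearMap.adjoint
        ((((P0 ∘ₗ (σp ∘ₗ P0)) - (P0 ∘ₗ (σp ∘ₗ P2)) ∘ₗ (C ∘ₗ (P2 ∘ₗ (σp ∘ₗ P0))))) ∘ₗ
          gschurLM P0 P1 σ B) =
      (((P0 ∘ₗ (σp ∘ₗ P0)) - (P0 ∘ₗ (σp ∘ₗ P2)) ∘ₗ (C ∘ₗ (P2 ∘ₗ (σp ∘ₗ P0))))) ∘ₗ
        gschurLM P0 P1 σ B) ∧
    (LinearMap.adjoint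
        (gschurLM P0 P1 σ B ∘ₗ
          (((P0 ∘ₗ (σp ∘ₗ P0)) - (P0 ∘ₗ (σp ∘ₗ P2)) ∘ₗ (C ∘ₗ (P2 ∘ₗ (σp ∘ₗ P0)))))) =
      gschurLM P0 P1 σ B ∘ₗ
        (((P0 ∘ₗ (σp ∘ₗ P0)) - (P0 ∘ₗ (σp ∘ₗ P2)) ∘ₗ (C ∘ₗ (P2 ∘ₗ (σp ∘ₗ P0)))))) :=
  stmt_15_general P0 P1 P2 hP0 hP0sa hP2 hP2sa h02 hsum σ hσsa σp hσp1 hσp2 hσp3 hσp4 B hB1 hB2 hB3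
    hB4 C hC1 hC2 hC3 hC4 hb hc hd he
end
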